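/- Let the symmetric group S_n act on P_n by letting w ∈ S_n send a point with I-components [a_i^I]_{i∈I} to the point whose w(I)-component is [a_{w^{-1}(j)}^I]_{j∈w(I)} for each nonempty I ⊆ [n]. Then: (1) Y_n is stable under this S_n-action; (2) a point p ∈ Y_n is fixed by the T_n-action if and only if its chain [n] = K_1 ⊋ ⋯ ⊋ K_{m+1} = ∅ is a complete flag, i.e. m = n and |K_ℓ| = n+1−ℓ for all ℓ; and (3) S_n acts simply transitively on the set of T_n-fixed points of Y_n (so there are exactly n! of them). -/

import Mathlib

noncomputable section

open Projectivization

instance projTopology {K V : Type*} [DivisionRing K] [AddCommGroup V] [Module K V]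
    [TopologicalSpace V] : TopologicalSpace (Projectivization K V) :=
  inferInstanceAs (TopologicalSpace (Quotient (projectivizationSetoid K V)))

/-- The index type of nonempty subsets of `ι`. -/
abbrev NES (ι : Type) := {I : Set ι // I.Nonempty}

/-- The ambient product `P = ∏_{∅ ≠ I ⊆ ι} ℙ^I` of projective spaces. -/
abbrev PSp (ι : Type) := (I : NES ι) → Projectivization ℂ (↥I.1 → ℂ)

/-- The subset of `ℙ^ι` consisting of points all of whose homogeneous coordinates
are nonzero (an algebraic torus). -/
def torusSet (ι : Type) : Set (Projectivization ℂ (ι → ℂ)) := {x | ∀ i, x.rep i ≠ 0}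

open Classical in
/-- The `i`-th homogeneous coordinate (for the chosen representative `rep`) of the
`K`-component of a point `p ∈ P`; junk value `0` if `i ∉ K` or `K = ∅`. -/
def pcoord (ι : Type) (p : PSp ι) (K : Set ι) (i : ι) : ℂ :=
  if h : K.Nonempty ∧ i ∈ K then (p ⟨K, h.1⟩).rep ⟨i, h.2⟩ else 0

lemma pcoord_exists_ne (ι : Type) (p : PSp ι) (K : Set ι) (hK : K.Nonempty) :
    ∃ i, i ∈ K ∧ pcoord ι p K i ≠ 0 := by
  obtain ⟨x, hx⟩ := Function.ne_iff.mp (Projectivization.rep_nonzero (p ⟨K, hK⟩))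
  refine ⟨x.1, x.2, ?_⟩
  rw [pcoord, dif_pos ⟨hK, x.2⟩]
  simpa using hx

/-- The map `ρ` from the torus to `P`, whose `I`-component is given by restricting
the homogeneous coordinates. -/
def rho (ι : Type) (x : ↥(torusSet ι)) : PSp ι := fun I =>
  Projectivization.mk ℂ (fun i : ↥I.1 => x.1.rep i.1) <| by
    obtain ⟨i, hi⟩ := I.2
    intro h0
    exact x.2 i (by simpa using congrFun h0 ⟨i, hi⟩)

/-- `Y`, the closure of `ρ(T)` in `P`. -/
def Yn (ι : Type) : Set (PSp ι) := closure (Set.range (rho ι))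

/-- The chain of a point `p ∈ P`: `chainK ι p 0 = univ` (this is `K₁` in the paper)
and `chainK ι p (ℓ+1)` (i.e. `K_{ℓ+2}`) consists of those `k ∈ chainK ι p ℓ` for which the
`k`-th homogeneous coordinate of the `chainK ι p ℓ`-component of `p` vanishes. -/
def chainK (ι : Type) (p : PSp ι) : ℕ → Set ι
  | 0 => Set.univ
  | ℓ + 1 => {k ∈ chainK ι p ℓ | pcoord ι p (chainK ι p ℓ) k = 0}

/-- A chain of subsets `ι = K 0 ⊋ K 1 ⊋ ⋯ ⊋ K m = ∅` (written `K₁ ⊋ ⋯ ⊋ K_{m+1}` in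
the paper); we extend it by `∅` beyond the `m`-th step so that it is determined by
the function `K`. -/
structure SubsetChain (ι : Type) where
  m : ℕ
  K : ℕ → Set ι
  first : K 0 = Set.univ
  strict : ∀ ℓ < m, K (ℓ + 1) ⊂ K ℓ
  last : K m = ∅
  beyond : ∀ ℓ, m ≤ ℓ → K ℓ = ∅

/-- The piece `O_{K₁,…,K_{m+1}}` of `Y`: those points of `Y` whose chain is the given one. -/
def Ochain (ι : Type) (c : SubsetChain ι) : Set (PSp ι) :=
  {p ∈ Yn ι | ∀ ℓ ≤ c.m, chainK ι p ℓ = c.K ℓ}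

/-- The subset `D_{K₁,…,K_{m+1}}` of `Y`: the points whose `K_ℓ`-component has vanishing
coordinates indexed by `K_{ℓ+1}`. -/
def Dchain (ι : Type) (c : SubsetChain ι) : Set (PSp ι) :=
  {p ∈ Yn ι | ∀ ℓ < c.m, ∀ k ∈ c.K (ℓ + 1), pcoord ι p (c.K ℓ) k = 0}

/-- The action of an element of the torus on a point of `P`:
`[a]·([b_i]_{i ∈ I})_I = ([a_i b_i]_{i ∈ I})_I`. -/
def act (ι : Type) (t : ↥(torusSet ι)) (p : PSp ι) : PSp ι := fun I =>
  Projectivization.mk ℂ (fun i : ↥I.1 => t.1.rep i.1 * (p I).rep i) <| by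
    intro h0
    obtain ⟨i, hi⟩ := Function.ne_iff.mp (Projectivization.rep_nonzero (p I))
    have h : t.1.rep i.1 * (p I).rep i = 0 := by simpa using congrFun h0 i
    exact mul_ne_zero (t.2 i.1) (by simpa using hi) h

/-- The action of a permutation `w` of `ι` on `P`: the `w(I)`-component of `w·p` is
`[a^I_{w⁻¹(j)}]_{j ∈ w(I)}`; equivalently the `J`-component of `w·p` is
`[a^{w⁻¹(J)}_{w⁻¹(j)}]_{j ∈ J}`. -/
def permAct (ι : Type) (w : Equiv.Perm ι) (p : PSp ι) : PSp ι := fun J =>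
  Projectivization.mk ℂ (fun j : ↥J.1 => pcoord ι p (⇑(w⁻¹) '' J.1) (w⁻¹ j.1)) <| by
    have hK : ((⇑(w⁻¹) : ι → ι) '' J.1).Nonempty := J.2.image _
    obtain ⟨i, hi, hne⟩ := pcoord_exists_ne ι p _ hK
    obtain ⟨j, hj, hji⟩ := hi
    intro h0
    apply hne
    have h := congrFun h0 ⟨j, hj⟩
    simpa [hji] using h

/-!
On `Y` the `2 × 2` minors `a^J_i a^I_{i'} = a^J_{i'} a^I_i` (for `I ⊆ J`) vanish: they are closed
conditions holding on `ρ(T)`. Let the depth of `i` be the `ℓ` with `i ∈ K_ℓ \ K_{ℓ+1}`. If `ℓ` is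
the least depth on `I`, then `I ⊆ K_ℓ`, and the minor against the `K_ℓ`-component shows that the
`I`-component of a point of `Y` vanishes off the elements of least depth.

A torus-fixed point has coordinate points as components, so its chain loses one element at each
step. Conversely, along a complete flag the depth is injective, so every component is the coordinate
point at the element of least depth: the point is determined by the ordering of `[n]` by depth.
Every ordering `σ` occurs, as the limit of `ρ([s ^ σ(i)]_i)` when `s → 0`, and `w` sends the point
of `σ` to the point of `σ ∘ w⁻¹`; hence `S_n` acts simply transitively on the fixed points.
-/

open scoped LinearAlgebra.Projectivization
open Function Topology

namespace Projectivization

variable {K V W : Type*} [DivisionRing K] [AddCommGroup V] [Module K V] [TopologicalSpace V]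
  [AddCommGroup W] [Module K W] [TopologicalSpace W]

lemma rep_mk_eq_zero_iff {ι : Type*} (v : ι → K) (hv : v ≠ 0) (i : ι) :
    (mk K v hv).rep i = 0 ↔ v i = 0 := by
  obtain ⟨a, ha⟩ := exists_smul_eq_mk_rep K v hv
  rw [← ha, Pi.smul_apply, Units.smul_def, smul_eq_mul, mul_eq_zero]
  simp

lemma isQuotientMap_mk' : IsQuotientMap (mk' K : {v : V // v ≠ 0} → ℙ K V) :=
  isQuotientMap_quotient_mk'

lemma continuous_mk {X : Type*} [TopologicalSpace X] {f : X → V} (hf : Continuous f)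
    (h : ∀ x, f x ≠ 0) : Continuous fun x => mk K (f x) (h x) :=
  isQuotientMap_mk'.continuous.comp (hf.subtype_mk h)

lemma isOpenMap_mk' [ContinuousConstSMul K V] :
    IsOpenMap (mk' K : {v : V // v ≠ 0} → ℙ K V) := by
  intro U hU
  rw [← isQuotientMap_mk'.isOpen_preimage]
  have hsat : mk' K ⁻¹' (mk' K '' U) =
      ⋃ a : Kˣ, (fun v : {v : V // v ≠ 0} => (⟨a • v.1, (smul_ne_zero_iff_ne a).2 v.2⟩ :
        {v : V // v ≠ 0})) ⁻¹' U := by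
    ext v
    simp only [Set.mem_preimage, Set.mem_image, Set.mem_iUnion, mk'_eq_mk]
    constructor
    · rintro ⟨u, hu, huv⟩
      obtain ⟨a, ha⟩ := (mk_eq_mk_iff K _ _ u.2 v.2).1 huv
      exact ⟨a, by rwa [show (⟨a • v.1, _⟩ : {v : V // v ≠ 0}) = u from Subtype.ext ha]⟩
    · rintro ⟨a, ha⟩
      exact ⟨_, ha, (mk_eq_mk_iff K _ _ _ v.2).2 ⟨a, rfl⟩⟩
  rw [hsat]
  exact isOpen_iUnion fun a => hU.preimage ((continuous_const_smul _).comp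
    continuous_subtype_val |>.subtype_mk _)

lemma continuous_map {f : V →ₗ[K] W} (hf : Function.Injective f) (hfc : Continuous f) :
    Continuous (map f hf) := by
  rw [isQuotientMap_mk'.continuous_iff]
  have : map f hf ∘ mk' K = fun v : {v : V // v ≠ 0} =>
      mk K (f v.1) ((map_ne_zero_iff f hf).2 v.2) := funext fun v => map_mk f hf v.1 v.2
  rw [this]
  exact continuous_mk (hfc.comp continuous_subtype_val) _

lemma isClosed_setOf_rep_rep [ContinuousConstSMul K V] [ContinuousConstSMul K W]
    {P : V → W → Prop} (hP : IsClosed {x : V × W | P x.1 x.2})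
    (hsmul : ∀ (a b : Kˣ) v w, P (a • v) (b • w) ↔ P v w) :
    IsClosed {z : ℙ K V × ℙ K W | P z.1.rep z.2.rep} := by
  have hq : IsQuotientMap (Prod.map (mk' K : {v : V // v ≠ 0} → ℙ K V)
      (mk' K : {w : W // w ≠ 0} → ℙ K W)) := by
    refine (isOpenMap_mk'.prodMap isOpenMap_mk').isQuotientMap
      (isQuotientMap_mk'.continuous.prodMap isQuotientMap_mk'.continuous) ?_
    rintro ⟨x, y⟩
    exact ⟨(⟨x.rep, x.rep_nonzero⟩, ⟨y.rep, y.rep_nonzero⟩), Prod.ext x.mk_rep y.mk_rep⟩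
  rw [← hq.isClosed_preimage]
  have : Prod.map (mk' K) (mk' K) ⁻¹' {z : ℙ K V × ℙ K W | P z.1.rep z.2.rep} =
      (Prod.map Subtype.val Subtype.val) ⁻¹' {x : V × W | P x.1 x.2} := by
    ext ⟨v, w⟩
    obtain ⟨a, ha⟩ := exists_smul_eq_mk_rep K v.1 v.2
    obtain ⟨b, hb⟩ := exists_smul_eq_mk_rep K w.1 w.2
    simp only [Set.mem_preimage, Set.mem_ofPred_eq, Prod.map_fst, Prod.map_snd, mk'_eq_mk, ← ha,
      ← hb, hsmul]
  rw [this]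
  exact hP.preimage (continuous_subtype_val.prodMap continuous_subtype_val)

end Projectivization

section CoordPoint

variable {K ι : Type*} [DivisionRing K]

variable (K) in
open Classical in
def coordPoint (k : ι) : ℙ K (ι → K) :=
  mk K (Pi.single k 1) (by simp)

lemma rep_coordPoint_eq_zero_iff (k i : ι) : (coordPoint K k).rep i = 0 ↔ i ≠ k := by
  classical
  rw [coordPoint, rep_mk_eq_zero_iff]
  by_cases h : i = k <;> simp [h]

lemma eq_coordPoint_of_rep_eq_zero (x : ℙ K (ι → K)) (k : ι)
    (h : ∀ i, i ≠ k → x.rep i = 0) : x = coordPoint K k := by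
  classical
  have hk : x.rep k ≠ 0 := fun h0 =>
    x.rep_nonzero (funext fun i => if hik : i = k then hik ▸ h0 else h i hik)
  rw [← x.mk_rep, coordPoint, mk_eq_mk_iff]
  refine ⟨Units.mk0 _ hk, funext fun i => ?_⟩
  by_cases hik : i = k
  · subst hik; simp
  · simp [hik, h i hik]

lemma coordPoint_injective : Injective (coordPoint K : ι → ℙ K (ι → K)) := by
  intro k k' h
  by_contra hne
  have := (rep_coordPoint_eq_zero_iff (K := K) k' k).2 hne
  rw [← h, rep_coordPoint_eq_zero_iff] at this
  exact this rfl

lemma map_funCongrLeft_coordPoint {κ : Type*} (e : ι ≃ κ) (k : κ) :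
    map (LinearEquiv.funCongrLeft K K e).toLinearMap (LinearEquiv.injective _) (coordPoint K k) =
      coordPoint K (e.symm k) := by
  classical
  simp only [coordPoint, map_mk]
  congr 1
  funext j
  simp [LinearEquiv.funCongrLeft_apply, Pi.single_apply, Equiv.eq_symm_apply]

end CoordPoint

section Torus

variable {ι : Type}

lemma pcoord_eq (p : PSp ι) {K : Set ι} (hK : K.Nonempty) {i : ι} (hi : i ∈ K) :
    pcoord ι p K i = (p ⟨K, hK⟩).rep ⟨i, hi⟩ := by
  rw [pcoord, dif_pos ⟨hK, hi⟩]

def rhoMk (v : ι → ℂ) (hv : ∀ i, v i ≠ 0) : PSp ι := fun I =>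
  mk ℂ (fun i : I.1 => v i) fun h => hv _ (congrFun h ⟨_, I.2.some_mem⟩)

lemma rho_eq_rhoMk (x : torusSet ι) : rho ι x = rhoMk x.1.rep fun i => x.2 i := rfl

lemma rhoMk_eq_of_eq_smul {v w : ι → ℂ} (hv : ∀ i, v i ≠ 0) (hw : ∀ i, w i ≠ 0)
    (a : ℂˣ) (h : w = a • v) : rhoMk w hw = rhoMk v hv :=
  funext fun _ => (mk_eq_mk_iff ℂ _ _ _ _).2 ⟨a, by subst h; rfl⟩

lemma rhoMk_mem_range_rho [Nonempty ι] (v : ι → ℂ) (hv : ∀ i, v i ≠ 0) :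
    rhoMk v hv ∈ Set.range (rho ι) := by
  have hv0 : v ≠ 0 := fun h => hv (Classical.arbitrary ι) (congrFun h _)
  obtain ⟨a, ha⟩ := exists_smul_eq_mk_rep ℂ v hv0
  have hx : mk ℂ v hv0 ∈ torusSet ι := fun i => by
    rw [← ha]; exact smul_ne_zero a.ne_zero (hv i)
  refine ⟨⟨_, hx⟩, ?_⟩
  exact rhoMk_eq_of_eq_smul hv hx a ha.symm

end Torus

section Minors

variable {ι : Type}

lemma rep_mul_rep_comm_of_mem_Yn {p : PSp ι} (hp : p ∈ Yn ι) {I J : NES ι} (hIJ : I.1 ⊆ J.1)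
    (i i' : I.1) : (p J).rep (Set.inclusion hIJ i) * (p I).rep i' =
      (p J).rep (Set.inclusion hIJ i') * (p I).rep i := by
  let P : (J.1 → ℂ) → (I.1 → ℂ) → Prop := fun v w =>
    ∀ i i', v (Set.inclusion hIJ i) * w i' = v (Set.inclusion hIJ i') * w i
  have hP : IsClosed {x : (J.1 → ℂ) × (I.1 → ℂ) | P x.1 x.2} := by
    simp only [P, Set.ofPred_forall]
    exact isClosed_iInter fun i => isClosed_iInter fun i' =>
      isClosed_eq (by fun_prop) (by fun_prop)
  have hsmul : ∀ (a b : ℂˣ) v w, P (a • v) (b • w) ↔ P v w := by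
    intro a b v w
    refine forall₂_congr fun i i' => ?_
    simp only [Pi.smul_apply, Units.smul_def, smul_eq_mul]
    rw [mul_mul_mul_comm, mul_mul_mul_comm _ (v _)]
    exact mul_right_inj' (mul_ne_zero a.ne_zero b.ne_zero)
  have hclosed : IsClosed {p : PSp ι | P (p J).rep (p I).rep} :=
    (isClosed_setOf_rep_rep hP hsmul).preimage (f := fun p : PSp ι => (p J, p I)) (by fun_prop)
  refine closure_minimal ?_ hclosed hp i i'
  rintro _ ⟨x, rfl⟩
  obtain ⟨a, ha⟩ := exists_smul_eq_mk_rep ℂ (fun j : J.1 => x.1.rep j) fun h =>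
    x.2 _ (congrFun h ⟨_, J.2.some_mem⟩)
  obtain ⟨b, hb⟩ := exists_smul_eq_mk_rep ℂ (fun j : I.1 => x.1.rep j) fun h =>
    x.2 _ (congrFun h ⟨_, I.2.some_mem⟩)
  intro i i'
  simp only [rho, ← ha, ← hb, Pi.smul_apply, Units.smul_def, smul_eq_mul]
  ring

end Minors

section Fixed

variable {ι : Type} {p : PSp ι}

lemma exists_torusSet_rep_ne {k j : ι} (hkj : k ≠ j) :
    ∃ t : torusSet ι, t.1.rep k ≠ t.1.rep j := by
  classical
  let v : ι → ℂ := Function.update 1 k 2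
  have hv : ∀ i, v i ≠ 0 := fun i => by
    by_cases h : i = k <;> simp [v, h]
  have hv0 : v ≠ 0 := fun h => hv k (congrFun h k)
  obtain ⟨a, ha⟩ := exists_smul_eq_mk_rep ℂ v hv0
  refine ⟨⟨mk ℂ v hv0, fun i => by rw [← ha]; exact smul_ne_zero a.ne_zero (hv i)⟩, ?_⟩
  simp only [← ha, Pi.smul_apply, Units.smul_def, smul_eq_mul, v, Function.update_self,
    Function.update_of_ne hkj.symm, Pi.one_apply, ne_eq, mul_eq_mul_left_iff, a.ne_zero]
  norm_num

lemma rep_eq_of_act_eq_self (hfix : ∀ t : torusSet ι, act ι t p = p) (t : torusSet ι)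
    {I : NES ι} {i j : I.1} (hi : (p I).rep i ≠ 0) (hj : (p I).rep j ≠ 0) :
    t.1.rep i = t.1.rep j := by
  obtain ⟨c, hc⟩ := (mk_eq_mk_iff ℂ _ _ _ _).1 ((congrFun (hfix t) I).trans (p I).mk_rep.symm)
  have key : ∀ i, (p I).rep i ≠ 0 → t.1.rep i = c := fun i hi =>
    (mul_right_cancel₀ hi (congrFun hc i)).symm
  rw [key i hi, key j hj]

lemma exists_eq_coordPoint_of_act_eq_self (hfix : ∀ t : torusSet ι, act ι t p = p)
    (I : NES ι) : ∃ k, p I = coordPoint ℂ k := by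
  obtain ⟨k, hk⟩ := Function.ne_iff.1 (p I).rep_nonzero
  refine ⟨k, eq_coordPoint_of_rep_eq_zero _ k fun i hik => ?_⟩
  by_contra hi
  obtain ⟨t, ht⟩ := exists_torusSet_rep_ne (Subtype.coe_ne_coe.2 hik)
  exact ht (rep_eq_of_act_eq_self hfix t hi hk)

lemma act_eq_self_of_eq_coordPoint (h : ∀ I, ∃ k, p I = coordPoint ℂ k) (t : torusSet ι) :
    act ι t p = p := by
  funext I
  obtain ⟨k, hk⟩ := h I
  conv_rhs => rw [← (p I).mk_rep]
  refine (mk_eq_mk_iff ℂ _ _ _ _).2 ⟨Units.mk0 _ (t.2 k), funext fun i => ?_⟩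
  by_cases hik : i = k
  · subst hik; simp
  · have hi : (p I).rep i = 0 := by rw [hk]; exact (rep_coordPoint_eq_zero_iff k i).2 hik
    simp [hi]

end Fixed

section Chain

variable {ι : Type} {p : PSp ι}

lemma chainK_succ_subset (p : PSp ι) (ℓ : ℕ) : chainK ι p (ℓ + 1) ⊆ chainK ι p ℓ :=
  fun _ hk => hk.1

lemma chainK_antitone (p : PSp ι) : Antitone (chainK ι p) :=
  antitone_nat_of_succ_le (chainK_succ_subset p)

lemma chainK_succ_ssubset {ℓ : ℕ} (hne : (chainK ι p ℓ).Nonempty) :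
    chainK ι p (ℓ + 1) ⊂ chainK ι p ℓ := by
  obtain ⟨k, hk, hk0⟩ := pcoord_exists_ne ι p _ hne
  exact (Set.ssubset_iff_of_subset (chainK_succ_subset p ℓ)).2 ⟨k, hk, fun h => hk0 h.2⟩

variable [Finite ι]

lemma ncard_chainK_le (p : PSp ι) (ℓ : ℕ) : (chainK ι p ℓ).ncard ≤ Nat.card ι - ℓ := by
  induction ℓ with
  | zero => simp [chainK, Set.ncard_univ]
  | succ ℓ ih =>
    rcases (chainK ι p ℓ).eq_empty_or_nonempty with h | h
    · simp [Set.subset_empty_iff.1 (h ▸ chainK_succ_subset p ℓ)]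
    · have := Set.ncard_lt_ncard (chainK_succ_ssubset h) (Set.toFinite _)
      omega

lemma chainK_card_eq_empty (p : PSp ι) : chainK ι p (Nat.card ι) = ∅ :=
  (Set.ncard_eq_zero (Set.toFinite _)).1 (by have := ncard_chainK_le p (Nat.card ι); omega)

open Classical in
/-- The index `ℓ` (counted from `0`) with `i ∈ K_ℓ \ K_{ℓ+1}`. -/
def chainDepth (p : PSp ι) (i : ι) : ℕ :=
  Nat.find (⟨Nat.card ι, fun h => by
    simpa [chainK_card_eq_empty p] using chainK_succ_subset p _ h⟩ :
    ∃ ℓ, i ∉ chainK ι p (ℓ + 1))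

lemma mem_chainK_iff_le_chainDepth {i : ι} {ℓ : ℕ} :
    i ∈ chainK ι p ℓ ↔ ℓ ≤ chainDepth p i := by
  classical
  rw [chainDepth, Nat.le_find_iff]
  simp only [not_not]
  constructor
  · exact fun hi m hm => chainK_antitone p hm hi
  · cases ℓ with
    | zero => exact fun _ => trivial
    | succ ℓ => exact fun h => h ℓ (Nat.lt_succ_self ℓ)

lemma chainDepth_lt_card (i : ι) : chainDepth p i < Nat.card ι := by
  by_contra! h
  simpa [chainK_card_eq_empty p] using mem_chainK_iff_le_chainDepth.2 h

lemma pcoord_chainK_chainDepth_ne_zero (i : ι) :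
    pcoord ι p (chainK ι p (chainDepth p i)) i ≠ 0 := fun h =>
  (Nat.lt_irrefl _) (mem_chainK_iff_le_chainDepth.1 ⟨mem_chainK_iff_le_chainDepth.2 le_rfl, h⟩)

lemma pcoord_chainK_eq_zero {i : ι} {ℓ : ℕ} (h : ℓ < chainDepth p i) :
    pcoord ι p (chainK ι p ℓ) i = 0 :=
  (mem_chainK_iff_le_chainDepth.2 h).2

end Chain

section CompleteFlag

variable {ι : Type} {p : PSp ι}

lemma chainK_succ_eq_sdiff_of_act_eq_self (hfix : ∀ t : torusSet ι, act ι t p = p) {ℓ : ℕ}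
    (hne : (chainK ι p ℓ).Nonempty) :
    ∃ k ∈ chainK ι p ℓ, chainK ι p (ℓ + 1) = chainK ι p ℓ \ {k} := by
  obtain ⟨k, hk⟩ := exists_eq_coordPoint_of_act_eq_self hfix ⟨_, hne⟩
  refine ⟨k, k.2, Set.ext fun i => and_congr_right fun hi => ?_⟩
  rw [pcoord_eq p hne hi, hk, rep_coordPoint_eq_zero_iff, Set.mem_singleton_iff, ne_eq,
    Subtype.ext_iff]

lemma ncard_chainK_of_act_eq_self (hfix : ∀ t : torusSet ι, act ι t p = p) :
    ∀ ℓ ≤ Nat.card ι, (chainK ι p ℓ).ncard = Nat.card ι - ℓ := by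
  intro ℓ
  induction ℓ with
  | zero => simp [chainK, Set.ncard_univ]
  | succ ℓ ih =>
    intro hℓ
    have hcard := ih (by omega)
    have hne : (chainK ι p ℓ).Nonempty := Set.nonempty_of_ncard_ne_zero (by omega)
    obtain ⟨k, hk, hstep⟩ := chainK_succ_eq_sdiff_of_act_eq_self hfix hne
    rw [hstep, Set.ncard_sdiff_singleton_of_mem hk, hcard]
    omega

variable [Finite ι]

lemma chainDepth_injective
    (hcard : ∀ ℓ ≤ Nat.card ι, (chainK ι p ℓ).ncard = Nat.card ι - ℓ) :
    Injective (chainDepth p) := by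
  intro i j hij
  set ℓ := chainDepth p i
  have hℓ : ℓ < Nat.card ι := chainDepth_lt_card i
  have hdiff : (chainK ι p ℓ \ chainK ι p (ℓ + 1)).ncard = 1 := by
    rw [Set.ncard_sdiff (chainK_succ_subset p ℓ), hcard ℓ hℓ.le, hcard (ℓ + 1) hℓ]
    omega
  have hmem (k : ι) (hk : chainDepth p k = ℓ) :
      k ∈ chainK ι p ℓ \ chainK ι p (ℓ + 1) := by
    simp only [Set.mem_sdiff, mem_chainK_iff_le_chainDepth, hk]
    omega
  exact (Set.ncard_le_one_iff (Set.toFinite _)).1 hdiff.le (hmem i rfl) (hmem j hij.symm)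

end CompleteFlag

section FlagPoint

variable {ι : Type}

def lowest (r : ι → ℕ) (I : NES ι) : I.1 :=
  ⟨argminOn r I.1 I.2, argminOn_mem r I.1 I.2⟩

lemma lowest_le (r : ι → ℕ) (I : NES ι) {i : ι} (hi : i ∈ I.1) : r (lowest r I) ≤ r i :=
  argminOn_le r I.1 hi

lemma lowest_eq {r : ι → ℕ} (hr : Injective r) {I : NES ι} {k : ι} (hk : k ∈ I.1)
    (h : ∀ i ∈ I.1, r k ≤ r i) : (lowest r I : ι) = k :=
  hr (le_antisymm (lowest_le r I hk) (h _ (lowest r I).2))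

/-- For injective `r`, the torus-fixed point whose chain removes the elements one at a time, in
increasing order of `r`. -/
def flagPoint (r : ι → ℕ) : PSp ι := fun I => coordPoint ℂ (lowest r I)

lemma act_flagPoint (r : ι → ℕ) (t : torusSet ι) : act ι t (flagPoint r) = flagPoint r :=
  act_eq_self_of_eq_coordPoint (fun _ => ⟨_, rfl⟩) t

lemma rep_eq_zero_of_chainDepth_lt [Finite ι] {p : PSp ι} (hp : p ∈ Yn ι) {I : NES ι}
    (k i : I.1) (hmin : ∀ j ∈ I.1, chainDepth p k ≤ chainDepth p j)
    (hlt : chainDepth p k < chainDepth p i) : (p I).rep i = 0 := by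
  have hIJ : I.1 ⊆ chainK ι p (chainDepth p k) := fun j hj =>
    mem_chainK_iff_le_chainDepth.2 (hmin j hj)
  have hJ : (chainK ι p (chainDepth p k)).Nonempty := ⟨k, hIJ k.2⟩
  have hminor := rep_mul_rep_comm_of_mem_Yn hp (J := ⟨_, hJ⟩) hIJ k i
  have hk := pcoord_chainK_chainDepth_ne_zero (p := p) k
  have hi := pcoord_chainK_eq_zero (p := p) hlt
  rw [pcoord_eq p hJ (hIJ k.2)] at hk
  rw [pcoord_eq p hJ (hIJ i.2)] at hi
  simp only [Set.inclusion] at hminor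
  rw [hi, zero_mul] at hminor
  exact (mul_eq_zero.1 hminor).resolve_left hk

lemma eq_flagPoint_chainDepth [Finite ι] {p : PSp ι} (hp : p ∈ Yn ι)
    (hinj : Injective (chainDepth p)) : p = flagPoint (chainDepth p) := by
  funext I
  refine eq_coordPoint_of_rep_eq_zero _ _ fun i hi => ?_
  refine rep_eq_zero_of_chainDepth_lt hp _ i (fun j hj => lowest_le _ I hj) ?_
  exact (lowest_le _ I i.2).lt_of_ne (hinj.ne (Subtype.coe_ne_coe.2 hi).symm)

end FlagPoint

section Closure

open Filter

variable {ι : Type}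

/-- Dividing the `I`-component of `ρ([s ^ r i]_i)` by `s ^ min_I r` gives a curve `c` that is
continuous at `s = 0`, where it equals `flagPoint r`. -/
lemma flagPoint_mem_Yn [Nonempty ι] {r : ι → ℕ} (hr : Injective r) :
    flagPoint r ∈ Yn ι := by
  let c : ℂ → PSp ι := fun s I =>
    mk ℂ (fun i : I.1 => s ^ (r i - r (lowest r I))) fun h => by
      simpa using congrFun h (lowest r I)
  have hc : Continuous c := continuous_pi fun I => continuous_mk (by fun_prop) _
  have hc0 : c 0 = flagPoint r := funext fun I => by
    refine eq_coordPoint_of_rep_eq_zero _ _ fun i hi => ?_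
    have hlt : r (lowest r I) < r i :=
      (lowest_le r I i.2).lt_of_ne (hr.ne (Subtype.coe_ne_coe.2 hi).symm)
    exact (rep_mk_eq_zero_iff _ _ i).2 (zero_pow (by omega))
  have hcs : ∀ s ≠ 0, c s ∈ Set.range (rho ι) := fun s hs => by
    convert rhoMk_mem_range_rho (fun i => s ^ r i) fun i => pow_ne_zero _ hs using 1
    funext I
    refine (mk_eq_mk_iff ℂ _ _ _ _).2
      ⟨(Units.mk0 s hs)⁻¹ ^ r (lowest r I), funext fun i => ?_⟩
    have := lowest_le r I i.2
    simp only [Pi.smul_apply, Units.smul_def, smul_eq_mul, Units.val_pow_eq_pow_val,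
      Units.val_inv_eq_inv_val, Units.val_mk0, inv_pow]
    rw [inv_mul_eq_iff_eq_mul₀ (pow_ne_zero _ hs), ← pow_add, Nat.add_sub_cancel' this]
  rw [← hc0]
  exact mem_closure_of_tendsto ((hc.tendsto 0).mono_left nhdsWithin_le_nhds)
    (eventually_nhdsWithin_of_forall (s := {0}ᶜ) hcs)

end Closure

section PermAction

variable {ι : Type}

lemma permAct_apply (w : Equiv.Perm ι) (p : PSp ι) (J : NES ι) :
    permAct ι w p J =
      map (LinearEquiv.funCongrLeft ℂ ℂ ((w⁻¹ : Equiv.Perm ι).image J.1)).toLinearMap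
        (LinearEquiv.injective _) (p ⟨_, J.2.image _⟩) := by
  conv_rhs => rw [← (p _).mk_rep, map_mk]
  unfold permAct
  congr 1
  funext j
  exact pcoord_eq p _ _

lemma continuous_permAct (w : Equiv.Perm ι) : Continuous (permAct ι w) := by
  rw [show permAct ι w = _ from funext fun p => funext (permAct_apply w p)]
  exact continuous_pi fun J => (continuous_map _ (continuous_pi fun _ => continuous_apply _)).comp
    (continuous_apply _)

lemma permAct_rhoMk (w : Equiv.Perm ι) (v : ι → ℂ) (hv : ∀ i, v i ≠ 0) :
    permAct ι w (rhoMk v hv) = rhoMk (fun i => v (w⁻¹ i)) fun _ => hv _ := by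
  funext J
  rw [permAct_apply]
  exact map_mk _ _ _ _

lemma permAct_mem_Yn (w : Equiv.Perm ι) {p : PSp ι} (hp : p ∈ Yn ι) :
    permAct ι w p ∈ Yn ι := by
  refine closure_mono ?_
    (image_closure_subset_closure_image (continuous_permAct w) ⟨p, hp, rfl⟩)
  rintro _ ⟨_, ⟨x, rfl⟩, rfl⟩
  have : Nonempty ι := ⟨(Function.ne_iff.1 x.1.rep_nonzero).choose⟩
  rw [rho_eq_rhoMk, permAct_rhoMk]
  exact rhoMk_mem_range_rho _ _

lemma permAct_flagPoint (w : Equiv.Perm ι) {r : ι → ℕ} (hr : Injective r) :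
    permAct ι w (flagPoint r) = flagPoint (fun i => r (w⁻¹ i)) := by
  funext J
  rw [permAct_apply, flagPoint, map_funCongrLeft_coordPoint, flagPoint]
  congr 1
  refine Subtype.ext (lowest_eq (hr.comp (w⁻¹).injective) ?_ ?_).symm
  · exact (((w⁻¹ : Equiv.Perm ι).image J.1).symm _).2
  · intro i hi
    simpa [Equiv.Perm.inv_def] using
      lowest_le r ⟨_, J.2.image _⟩ (Set.mem_image_of_mem (⇑w⁻¹) hi)

end PermAction

section Permutations

variable {n : ℕ}

lemma flagPoint_perm_injective :
    Injective fun σ : Equiv.Perm (Fin n) => flagPoint fun i => (σ i : ℕ) := by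
  intro σ τ h
  have hlowest : ∀ (ρ : Equiv.Perm (Fin n)) {i j : Fin n}, ρ i ≤ ρ j →
      (lowest (fun k => (ρ k : ℕ)) ⟨{i, j}, Set.insert_nonempty i {j}⟩ : Fin n) = i := by
    intro ρ i j hij
    refine lowest_eq (Fin.val_injective.comp ρ.injective) (Set.mem_insert i {j}) ?_
    rintro k (rfl | rfl)
    exacts [le_rfl, hij]
  have hlt : ∀ i j, σ i < σ j → τ i < τ j := by
    intro i j hij
    have hI := coordPoint_injective (congrFun h ⟨{i, j}, Set.insert_nonempty i {j}⟩)
    have hτ : (τ i : ℕ) ≤ τ j := by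
      have := lowest_le (fun k => (τ k : ℕ)) ⟨{i, j}, Set.insert_nonempty i {j}⟩
        (Set.mem_insert_of_mem i rfl)
      rwa [← hI, hlowest σ hij.le] at this
    exact (Fin.le_iff_val_le_val.2 hτ).lt_of_ne fun he => hij.ne (congrArg σ (τ.injective he))
  have hmono : StrictMono (τ ∘ σ.symm) := fun a b hab => hlt _ _ (by simpa using hab)
  have hid : τ ∘ σ.symm = id := by
    rw [← hmono.range_inj strictMono_id, Set.range_id]
    exact (τ.surjective.comp σ.symm.surjective).range_eq
  ext i
  simpa using congrArg Fin.val (congrFun hid (σ i)).symm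

lemma exists_perm_eq_flagPoint_of_act_eq_self {p : PSp (Fin n)} (hp : p ∈ Yn (Fin n))
    (hfix : ∀ t : torusSet (Fin n), act (Fin n) t p = p) :
    ∃ σ : Equiv.Perm (Fin n), p = flagPoint fun i => (σ i : ℕ) := by
  have hinj := chainDepth_injective (ncard_chainK_of_act_eq_self hfix)
  let d : Fin n → Fin n := fun i => ⟨chainDepth p i, by simpa using chainDepth_lt_card i⟩
  have hd : Injective d := fun i j h => hinj (Fin.val_eq_of_eq h)
  exact ⟨Equiv.ofBijective d (Finite.injective_iff_bijective.1 hd),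
    eq_flagPoint_chainDepth hp hinj⟩

lemma permAct_flagPoint_perm (w σ : Equiv.Perm (Fin n)) :
    permAct (Fin n) w (flagPoint fun i => (σ i : ℕ)) =
      flagPoint fun i => ((σ * w⁻¹) i : ℕ) :=
  permAct_flagPoint w (Fin.val_injective.comp σ.injective)

lemma setOf_act_eq_self_eq_range_flagPoint (hn : 0 < n) :
    {p ∈ Yn (Fin n) | ∀ t : torusSet (Fin n), act (Fin n) t p = p} =
      Set.range fun σ : Equiv.Perm (Fin n) => flagPoint fun i => (σ i : ℕ) := by
  have : Nonempty (Fin n) := ⟨⟨0, hn⟩⟩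
  ext p
  constructor
  · rintro ⟨hp, hfix⟩
    obtain ⟨σ, rfl⟩ := exists_perm_eq_flagPoint_of_act_eq_self hp hfix
    exact ⟨σ, rfl⟩
  · rintro ⟨σ, rfl⟩
    exact ⟨flagPoint_mem_Yn (Fin.val_injective.comp σ.injective), act_flagPoint _⟩

end Permutations

/-- The symmetric group action on `P_n` (the `w(I)`-component of `w·p` being
`[a^I_{w⁻¹(j)}]_{j ∈ w(I)}`) preserves `Y_n`; a point `p ∈ Y_n` is fixed by the torus
action if and only if its chain is a complete flag (i.e. `|K_{ℓ+1}| = n - ℓ` for all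
`0 ≤ ℓ ≤ n`, so `m = n`); and the symmetric group acts simply transitively on the set of
torus-fixed points of `Y_n`, so that there are exactly `n!` of them. -/
theorem stmt8 (n : ℕ) (hn : 1 ≤ n) :
    (∀ w : Equiv.Perm (Fin n), ∀ p ∈ Yn (Fin n), permAct (Fin n) w p ∈ Yn (Fin n)) ∧
    (∀ p ∈ Yn (Fin n),
      ((∀ t : ↥(torusSet (Fin n)), act (Fin n) t p = p) ↔
        (∀ ℓ ≤ n, (chainK (Fin n) p ℓ).ncard = n - ℓ))) ∧
    (∀ p ∈ Yn (Fin n), ∀ q ∈ Yn (Fin n),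
      (∀ t : ↥(torusSet (Fin n)), act (Fin n) t p = p) →
      (∀ t : ↥(torusSet (Fin n)), act (Fin n) t q = q) →
      ∃! w : Equiv.Perm (Fin n), permAct (Fin n) w p = q) ∧
    {p ∈ Yn (Fin n) | ∀ t : ↥(torusSet (Fin n)), act (Fin n) t p = p}.ncard =
      Nat.factorial n := by
  refine ⟨fun w p hp => permAct_mem_Yn w hp, fun p hp => ⟨fun hfix => ?_, fun hcard => ?_⟩,
    fun p hp q hq hfp hfq => ?_, ?_⟩
  · simpa using ncard_chainK_of_act_eq_self hfix
  · rw [eq_flagPoint_chainDepth hp (chainDepth_injective (by simpa using hcard))]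
    exact act_flagPoint _
  · obtain ⟨σ, rfl⟩ := exists_perm_eq_flagPoint_of_act_eq_self hp hfp
    obtain ⟨τ, rfl⟩ := exists_perm_eq_flagPoint_of_act_eq_self hq hfq
    refine ⟨τ⁻¹ * σ, ?_, fun w hw => ?_⟩
    · beta_reduce
      rw [permAct_flagPoint_perm, mul_inv_rev, inv_inv, mul_inv_cancel_left]
    · rw [← flagPoint_perm_injective ((permAct_flagPoint_perm w σ).symm.trans hw)]
      group
  · rw [setOf_act_eq_self_eq_range_flagPoint hn,
      Set.ncard_range_of_injective flagPoint_perm_injective, Nat.card_perm, Nat.card_fin]
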